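/- Let k < 0 be a real number, let g be the constant function g(x) = k, and let d = α·p₁ : ℝ → ℝ be a polynomial function. Suppose s₁ < s₂ are real numbers with d(s₁) = −√(−4k), d(s₂) = √(−4k), and d(x)² + 4k ≤ 0 for every x ∈ [s₁, s₂]. Then for all nonnegative integers n ≠ m, ∫_{s₁}^{s₂} (𝓛ₙ(x) · 𝓛ₘ(x) / √(−4k − d(x)²)) · d′(x) dx = 0. -/

import Mathlib

/-- Generalized Fibonacci polynomials of Lucas type:
`𝓛₀ = p₀`, `𝓛₁ = p₁`, `𝓛ₙ = d·𝓛ₙ₋₁ + g·𝓛ₙ₋₂` where `d = (2/p₀)·p₁`. -/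
noncomputable def GFPL (p0 : ℝ) (p1 g : ℝ → ℝ) : ℕ → ℝ → ℝ
  | 0 => fun _ => p0
  | 1 => fun x => p1 x
  | n + 2 => fun x =>
      (2 / p0) * p1 x * GFPL p0 p1 g (n + 1) x + g x * GFPL p0 p1 g n x


open Real MeasureTheory Set

noncomputable def LPoly (p0 k : ℝ) (P : Polynomial ℝ) : ℕ → Polynomial ℝ
  | 0 => Polynomial.C p0
  | 1 => Polynomial.C (p0 / 2) * P
  | n + 2 => P * LPoly p0 k P (n + 1) + Polynomial.C k * LPoly p0 k P n

lemma GFPL_eq_LPoly (p0 k : ℝ) (hp0 : p0 ≠ 0) (p1 d : ℝ → ℝ)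
    (hddef : ∀ x, d x = (2 / p0) * p1 x) (P : Polynomial ℝ) (hP : ∀ x, d x = P.eval x) :
    ∀ n x, GFPL p0 p1 (fun _ => k) n x = (LPoly p0 k P n).eval x := by
  have hp1 : ∀ x, p1 x = p0 / 2 * P.eval x := by
    intro x
    have h := hddef x
    rw [hP x] at h
    field_simp at h ⊢
    linarith
  intro n
  induction n using Nat.twoStepInduction with
  | zero => intro x; simp [GFPL, LPoly]
  | one => intro x; simp [GFPL, LPoly, hp1 x]
  | more n ih1 ih2 =>
    intro x
    simp only [GFPL, LPoly, Polynomial.eval_add, Polynomial.eval_mul, Polynomial.eval_C,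
      ih1, ih2, hp1 x]
    field_simp

lemma GFPL_cos (p0 k : ℝ) (hp0 : p0 ≠ 0) (p1 d : ℝ → ℝ)
    (hddef : ∀ x, d x = (2 / p0) * p1 x) (e : ℝ) (he : 0 < e) (hke : k = -(e ^ 2) / 4) :
    ∀ (n : ℕ) (x : ℝ), -e ≤ d x → d x ≤ e →
      GFPL p0 p1 (fun _ => k) n x = p0 * (e / 2) ^ n * Real.cos (n * Real.arccos (d x / e)) := by
  have hp1 : ∀ x, p1 x = p0 / 2 * d x := by
    intro x
    have h := hddef x
    field_simp at h ⊢
    linarith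
  intro n
  induction n using Nat.twoStepInduction with
  | zero => intro x _ _; simp [GFPL]
  | one =>
    intro x h1 h2
    have hm1 : -1 ≤ d x / e := by rw [neg_le, ← neg_div]; exact (div_le_one he).mpr (by linarith)
    have hp1' : d x / e ≤ 1 := (div_le_one he).mpr h2
    have hcos : Real.cos (Real.arccos (d x / e)) = d x / e := Real.cos_arccos hm1 hp1'
    simp only [GFPL, Nat.cast_one, one_mul, hcos, hp1 x, pow_one]
    field_simp
  | more n ih1 ih2 =>
    intro x h1 h2
    set θ := Real.arccos (d x / e) with hθ
    have hm1 : -1 ≤ d x / e := by rw [neg_le, ← neg_div]; exact (div_le_one he).mpr (by linarith)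
    have hp1' : d x / e ≤ 1 := (div_le_one he).mpr h2
    have hcos : Real.cos θ = d x / e := Real.cos_arccos hm1 hp1'
    have key : Real.cos (((n : ℝ) + 2) * θ)
        = 2 * Real.cos (((n : ℝ) + 1) * θ) * Real.cos θ - Real.cos ((n : ℝ) * θ) := by
      have h1' : ((n : ℝ) + 2) * θ = ((n : ℝ) + 1) * θ + θ := by ring
      have h2' : (n : ℝ) * θ = ((n : ℝ) + 1) * θ - θ := by ring
      rw [h1', h2', Real.cos_add, Real.cos_sub]
      ring
    show (2 / p0) * p1 x * GFPL p0 p1 (fun _ => k) (n + 1) x + k * GFPL p0 p1 (fun _ => k) n x = _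
    rw [ih1 x h1 h2, ih2 x h1 h2, hke, hp1 x]
    push_cast
    rw [key, hcos]
    field_simp
    ring
private lemma alg_aux (p0 e D c1 c2 s : ℝ) (n m : ℕ) (he : e ≠ 0) (hs : s ≠ 0) :
    (p0 * (e/2)^n * c1) * (p0 * (e/2)^m * c2) / (e * s) * D
      = -(p0^2 * (e/2)^(n+m) * ((2*(c1*c2))/2 * (-(1/s) * (D/e)))) := by
  rw [pow_add]
  field_simp

set_option maxHeartbeats 2000000 in
theorem gfpl_chebyshev_orthogonality (p0 : ℝ)
    (hp0 : p0 = 1 ∨ p0 = -1 ∨ p0 = 2 ∨ p0 = -2)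
    (k : ℝ) (hk : k < 0) (p1 : ℝ → ℝ) (d : ℝ → ℝ)
    (hddef : ∀ x, d x = (2 / p0) * p1 x)
    (hdpoly : ∃ P : Polynomial ℝ, ∀ x, d x = P.eval x)
    (s1 s2 : ℝ) (hs : s1 < s2)
    (hds1 : d s1 = -Real.sqrt (-(4 * k))) (hds2 : d s2 = Real.sqrt (-(4 * k)))
    (hle : ∀ x ∈ Set.Icc s1 s2, d x ^ 2 + 4 * k ≤ 0)
    (n m : ℕ) (hnm : n ≠ m) :
    ∫ x in s1..s2,
        GFPL p0 p1 (fun _ => k) n x * GFPL p0 p1 (fun _ => k) m x /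
          Real.sqrt (-(4 * k) - d x ^ 2) * deriv d x = 0 := by
  have hp0' : p0 ≠ 0 := by rcases hp0 with h | h | h | h <;> rw [h] <;> norm_num
  obtain ⟨P, hP⟩ := hdpoly
  set e := Real.sqrt (-(4 * k)) with he_def
  have h4k : (0:ℝ) < -(4 * k) := by linarith
  have he : 0 < e := Real.sqrt_pos.mpr h4k
  have he2 : e ^ 2 = -(4 * k) := Real.sq_sqrt h4k.le
  have hke : k = -(e ^ 2) / 4 := by rw [he2]; ring
  have hdfun : d = fun y => P.eval y := funext hP
  have hdcont : Continuous d := by rw [hdfun]; exact P.continuous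
  have hd' : ∀ x, HasDerivAt d (P.derivative.eval x) x := by
    intro x; rw [hdfun]; exact P.hasDerivAt x
  have hderiv_d : ∀ x, deriv d x = P.derivative.eval x := fun x => (hd' x).deriv
  have hbound : ∀ x ∈ Set.Icc s1 s2, -e ≤ d x ∧ d x ≤ e := by
    intro x hx
    have h := hle x hx
    have h2 : d x ^ 2 ≤ e ^ 2 := by rw [he2]; linarith
    constructor
    · nlinarith
    · nlinarith
  have hGclosed := GFPL_cos p0 k hp0' p1 d hddef e he hke
  have hGpoly := GFPL_eq_LPoly p0 k hp0' p1 d hddef P hP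
  -- the integrand
  set F : ℝ → ℝ := fun x =>
    GFPL p0 p1 (fun _ => k) n x * GFPL p0 p1 (fun _ => k) m x /
      Real.sqrt (-(4 * k) - d x ^ 2) * deriv d x with hF_def
  -- cast facts
  have hnm' : n + m ≠ 0 := by
    rintro h
    rcases Nat.add_eq_zero.mp h with ⟨h1, h2⟩
    exact hnm (h1.trans h2.symm)
  have hNne : (n : ℝ) + (m : ℝ) ≠ 0 := by
    intro h
    exact hnm' (by exact_mod_cast h)
  have hMne : (n : ℝ) - (m : ℝ) ≠ 0 := by
    rw [sub_ne_zero]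
    exact fun h => hnm (by exact_mod_cast h)
  -- antiderivative
  set H : ℝ → ℝ := fun t =>
    (Real.sin (((n : ℝ) + m) * t) / ((n : ℝ) + m) +
      Real.sin (((n : ℝ) - m) * t) / ((n : ℝ) - m)) / 2 with hH_def
  set G : ℝ → ℝ := fun x => -(p0 ^ 2 * (e / 2) ^ (n + m) * H (Real.arccos (d x / e))) with hG_def
  have hGcont : Continuous G := by
    apply Continuous.neg
    apply continuous_const.mul
    apply Continuous.div_const
    apply Continuous.add <;>
    · apply Continuous.div_const
      exact Real.continuous_sin.comp (continuous_const.mul (Real.continuous_arccos.comp (hdcont.div_const e)))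
  -- derivative of G is F  where d x ^ 2 < e ^ 2
  have hGderiv : ∀ x ∈ Set.Icc s1 s2, d x ^ 2 < e ^ 2 → HasDerivAt G (F x) x := by
    intro x hx hlt
    obtain ⟨hb1, hb2⟩ := hbound x hx
    have hlt1 : d x < e := by nlinarith
    have hlt2 : -e < d x := by nlinarith
    have hu1 : d x / e < 1 := (div_lt_one he).mpr hlt1
    have hu2 : -1 < d x / e := by rw [neg_lt, ← neg_div]; exact (div_lt_one he).mpr (by linarith)
    set θ := Real.arccos (d x / e) with hθ
    have hs2pos : 0 < 1 - (d x / e) ^ 2 := by nlinarith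
    have hsqpos : 0 < Real.sqrt (1 - (d x / e) ^ 2) := Real.sqrt_pos.mpr hs2pos
    set D := P.derivative.eval x with hD
    have hA : HasDerivAt (fun y => d y / e) (D / e) x := (hd' x).div_const e
    have harc : HasDerivAt (fun y => Real.arccos (d y / e))
        (-(1 / Real.sqrt (1 - (d x / e) ^ 2)) * (D / e)) x :=
      by have h := (Real.hasDerivAt_arccos hu2.ne' hu1.ne).comp x hA; exact h
    have hsin1 : HasDerivAt (fun t => Real.sin (((n : ℝ) + m) * t))
        (Real.cos (((n : ℝ) + m) * θ) * ((n : ℝ) + m)) θ := by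
      simpa [Function.comp_def] using (Real.hasDerivAt_sin (((n : ℝ) + m) * θ)).comp θ
        ((hasDerivAt_id θ).const_mul ((n : ℝ) + m))
    have hsin2 : HasDerivAt (fun t => Real.sin (((n : ℝ) - m) * t))
        (Real.cos (((n : ℝ) - m) * θ) * ((n : ℝ) - m)) θ := by
      simpa [Function.comp_def] using (Real.hasDerivAt_sin (((n : ℝ) - m) * θ)).comp θ
        ((hasDerivAt_id θ).const_mul ((n : ℝ) - m))
    have hH' : HasDerivAt H
        ((Real.cos (((n : ℝ) + m) * θ) + Real.cos (((n : ℝ) - m) * θ)) / 2) θ := by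
      have h := ((hsin1.div_const ((n : ℝ) + m)).add (hsin2.div_const ((n : ℝ) - m))).div_const 2
      rw [mul_div_cancel_right₀ _ hNne, mul_div_cancel_right₀ _ hMne] at h
      exact h
    have hcomp : HasDerivAt (fun y => H (Real.arccos (d y / e)))
        ((Real.cos (((n : ℝ) + m) * θ) + Real.cos (((n : ℝ) - m) * θ)) / 2 *
          (-(1 / Real.sqrt (1 - (d x / e) ^ 2)) * (D / e))) x := by have h := hH'.comp x harc; exact h
    have hGd : HasDerivAt G
        (-(p0 ^ 2 * (e / 2) ^ (n + m) *
          ((Real.cos (((n : ℝ) + m) * θ) + Real.cos (((n : ℝ) - m) * θ)) / 2 *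
            (-(1 / Real.sqrt (1 - (d x / e) ^ 2)) * (D / e))))) x :=
      (hcomp.const_mul (p0 ^ 2 * (e / 2) ^ (n + m))).neg
    convert hGd using 1
    -- algebra: F x equals that derivative
    have hsqrt : Real.sqrt (-(4 * k) - d x ^ 2) = e * Real.sqrt (1 - (d x / e) ^ 2) := by
      have h1 : -(4 * k) - d x ^ 2 = e ^ 2 * (1 - (d x / e) ^ 2) := by
        rw [div_pow, mul_sub, mul_one, mul_div_cancel₀ _ (pow_ne_zero 2 he.ne'), he2]
      rw [h1, Real.sqrt_mul (sq_nonneg e), Real.sqrt_sq he.le]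
    have hprod : Real.cos (((n : ℝ) + m) * θ) + Real.cos (((n : ℝ) - m) * θ)
        = 2 * (Real.cos ((n : ℝ) * θ) * Real.cos ((m : ℝ) * θ)) := by
      rw [show ((n : ℝ) + m) * θ = (n : ℝ) * θ + (m : ℝ) * θ by ring,
        show ((n : ℝ) - m) * θ = (n : ℝ) * θ - (m : ℝ) * θ by ring,
        Real.cos_add, Real.cos_sub]
      ring
    show GFPL p0 p1 (fun _ => k) n x * GFPL p0 p1 (fun _ => k) m x /
        Real.sqrt (-(4 * k) - d x ^ 2) * deriv d x = _
    rw [hGclosed n x hb1 hb2, hGclosed m x hb1 hb2, hderiv_d x, ← hθ, hsqrt, hprod, ← hD]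
    exact alg_aux p0 e D _ _ _ n m he.ne' hsqpos.ne'
  -- F as rational function with polynomial numerator
  set W : ℝ → ℝ := fun x =>
    (LPoly p0 k P n).eval x * (LPoly p0 k P m).eval x * P.derivative.eval x with hW_def
  have hWcont : Continuous W :=
    ((LPoly p0 k P n).continuous.mul (LPoly p0 k P m).continuous).mul P.derivative.continuous
  have hF_eq : ∀ x, F x = W x / Real.sqrt (e ^ 2 - d x ^ 2) := by
    intro x
    show GFPL p0 p1 (fun _ => k) n x * GFPL p0 p1 (fun _ => k) m x /
        Real.sqrt (-(4 * k) - d x ^ 2) * deriv d x = _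
    rw [hGpoly n x, hGpoly m x, hderiv_d x,
      show -(4 * k) - d x ^ 2 = e ^ 2 - d x ^ 2 by rw [he2], div_mul_eq_mul_div]
  -- the sign polynomial
  set Q : Polynomial ℝ := LPoly p0 k P n * LPoly p0 k P m * P.derivative *
    (Polynomial.C (e ^ 2) - P ^ 2) with hQ_def
  have hQeval : ∀ x, Q.eval x = W x * (e ^ 2 - d x ^ 2) := by
    intro x
    simp [hQ_def, hW_def, hP x]
  have hLeval : ∀ j : ℕ, (LPoly p0 k P j).eval s2 = p0 * (e / 2) ^ j := by
    intro j
    have h2 : d s2 = e := hds2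
    rw [← hGpoly j s2, hGclosed j s2 (by rw [h2]; linarith) (by rw [h2]),
      h2, div_self he.ne', Real.arccos_one]
    simp
  have hLne : ∀ j : ℕ, LPoly p0 k P j ≠ 0 := by
    intro j hzero
    have := hLeval j
    rw [hzero] at this
    simp at this
    rcases this with h | h
    · exact hp0' h
    · exact he.ne' (by linarith)
  have hPd_ne : P.derivative ≠ 0 := by
    intro hzero
    have hdeg := Polynomial.natDegree_eq_zero_of_derivative_eq_zero hzero
    obtain ⟨a, ha⟩ := Polynomial.natDegree_eq_zero.mp hdeg
    have h1 : d s1 = a := by rw [hP s1, ← ha]; simp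
    have h2 : d s2 = a := by rw [hP s2, ← ha]; simp
    rw [hds1] at h1
    rw [hds2] at h2
    linarith
  have hPe_ne : Polynomial.C (e ^ 2) - P ^ 2 ≠ 0 := by
    have himage := intermediate_value_Icc hs.le hdcont.continuousOn
    have h0mem : (0:ℝ) ∈ Set.Icc (d s1) (d s2) := by
      rw [hds1, hds2]
      exact Set.mem_Icc.mpr ⟨by linarith, by linarith⟩
    obtain ⟨x0, hx0, hdx0⟩ := himage h0mem
    intro hzero
    have := congrArg (Polynomial.eval x0) hzero
    simp [← hP x0, hdx0] at this
    exact he.ne' (by nlinarith)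
  have hQne : Q ≠ 0 := by
    rw [hQ_def]
    exact mul_ne_zero (mul_ne_zero (mul_ne_zero (hLne n) (hLne m)) hPd_ne) hPe_ne
  set Z0 : Finset ℝ := Q.roots.toFinset with hZ0_def
  have hZ : ∀ x, Q.eval x = 0 → x ∈ Z0 := by
    intro x hx
    rw [hZ0_def, Multiset.mem_toFinset, Polynomial.mem_roots hQne]
    exact hx
  -- base case of integrability
  have base : ∀ a b : ℝ, s1 ≤ a → b ≤ s2 → (∀ t ∈ Set.Ioo a b, Q.eval t ≠ 0) →
      IntegrableOn F (Set.Ioo a b) volume := by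
    intro a b ha hb hno
    rcases le_or_gt b a with hba | hab
    · rw [Set.Ioo_eq_empty (not_lt.mpr hba)]
      exact integrableOn_empty
    have hsub : Set.Ioo a b ⊆ Set.Icc s1 s2 := fun t ht => ⟨ha.trans ht.1.le, ht.2.le.trans hb⟩
    have hlt : ∀ t ∈ Set.Ioo a b, d t ^ 2 < e ^ 2 := by
      intro t ht
      have h1 : e ^ 2 - d t ^ 2 ≠ 0 := by
        intro hcontra
        apply hno t ht
        rw [hQeval t, hcontra, mul_zero]
      have h2 : 0 ≤ e ^ 2 - d t ^ 2 := by
        have := hle t (hsub ht)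
        rw [he2]; linarith
      by_contra hcon
      push_neg at hcon
      exact h1 (by linarith [lt_of_le_of_ne h2 (Ne.symm h1)])
    have hWne : ∀ t ∈ Set.Ioo a b, W t ≠ 0 := by
      intro t ht hzero
      apply hno t ht
      rw [hQeval t, hzero, zero_mul]
    have hsqrtpos : ∀ t ∈ Set.Ioo a b, 0 < Real.sqrt (e ^ 2 - d t ^ 2) := by
      intro t ht
      exact Real.sqrt_pos.mpr (by linarith [hlt t ht])
    set t0 := (a + b) / 2 with ht0_def
    have ht0 : t0 ∈ Set.Ioo a b := ⟨by rw [ht0_def]; linarith, by rw [ht0_def]; linarith⟩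
    have hsign : (∀ t ∈ Set.Ioo a b, 0 < W t) ∨ (∀ t ∈ Set.Ioo a b, W t < 0) := by
      rcases lt_or_gt_of_ne (hWne t0 ht0) with hneg | hpos
      · right
        intro t ht
        by_contra hcon
        push_neg at hcon
        have hWt : 0 < W t := lt_of_le_of_ne hcon (Ne.symm (hWne t ht))
        have hmem : (0:ℝ) ∈ Set.uIcc (W t0) (W t) := Set.mem_uIcc.mpr (Or.inl ⟨hneg.le, hWt.le⟩)
        obtain ⟨z, hz, hWz⟩ := intermediate_value_uIcc hWcont.continuousOn hmem
        exact hWne z (Set.ordConnected_Ioo.uIcc_subset ht0 ht hz) hWz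
      · left
        intro t ht
        by_contra hcon
        push_neg at hcon
        have hWt : W t < 0 := lt_of_le_of_ne hcon (hWne t ht)
        have hmem : (0:ℝ) ∈ Set.uIcc (W t0) (W t) := Set.mem_uIcc.mpr (Or.inr ⟨hWt.le, hpos.le⟩)
        obtain ⟨z, hz, hWz⟩ := intermediate_value_uIcc hWcont.continuousOn hmem
        exact hWne z (Set.ordConnected_Ioo.uIcc_subset ht0 ht hz) hWz
    rcases hsign with hpos | hneg
    · have hint : IntegrableOn F (Set.Ioc a b) volume := by
        apply intervalIntegral.integrableOn_deriv_of_nonneg hGcont.continuousOn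
        · intro t ht
          exact hGderiv t (hsub ht) (hlt t ht)
        · intro t ht
          rw [hF_eq t]
          exact div_nonneg (hpos t ht).le (hsqrtpos t ht).le
      exact hint.mono_set Set.Ioo_subset_Ioc_self
    · have hint : IntegrableOn (fun x => -F x) (Set.Ioc a b) volume := by
        apply intervalIntegral.integrableOn_deriv_of_nonneg (g := fun x => -G x)
        · exact hGcont.neg.continuousOn
        · intro t ht
          exact (hGderiv t (hsub ht) (hlt t ht)).neg
        · intro t ht
          rw [hF_eq t, ← neg_div]
          exact div_nonneg (by linarith [hneg t ht]) (hsqrtpos t ht).le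
      have h2 : IntegrableOn F (Set.Ioc a b) volume :=
        hint.neg.congr (Filter.Eventually.of_forall (fun x => by simp))
      exact h2.mono_set Set.Ioo_subset_Ioc_self
  -- induction on number of roots
  have key : ∀ (N : ℕ) (a b : ℝ), s1 ≤ a → b ≤ s2 →
      (Z0.filter (fun t => t ∈ Set.Ioo a b)).card ≤ N →
      IntegrableOn F (Set.Ioo a b) volume := by
    intro N
    induction N with
    | zero =>
      intro a b ha hb hcard
      apply base a b ha hb
      intro t ht hQt
      have hmem : t ∈ Z0.filter (fun t => t ∈ Set.Ioo a b) :=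
        Finset.mem_filter.mpr ⟨hZ t hQt, ht⟩
      rw [Finset.card_eq_zero.mp (Nat.le_zero.mp hcard)] at hmem
      exact absurd hmem (Finset.notMem_empty t)
    | succ N ih =>
      intro a b ha hb hcard
      by_cases hex : ∃ t ∈ Set.Ioo a b, Q.eval t = 0
      · obtain ⟨t, ht, hQt⟩ := hex
        have htZ : t ∈ Z0.filter (fun u => u ∈ Set.Ioo a b) :=
          Finset.mem_filter.mpr ⟨hZ t hQt, ht⟩
        have hcard1 : (Z0.filter (fun u => u ∈ Set.Ioo a t)).card ≤ N := by
          have hsub : Z0.filter (fun u => u ∈ Set.Ioo a t) ⊆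
              (Z0.filter (fun u => u ∈ Set.Ioo a b)).erase t := by
            intro u hu
            rw [Finset.mem_filter] at hu
            refine Finset.mem_erase.mpr ⟨hu.2.2.ne, Finset.mem_filter.mpr ⟨hu.1, hu.2.1, hu.2.2.trans ht.2⟩⟩
          calc (Z0.filter (fun u => u ∈ Set.Ioo a t)).card
              ≤ ((Z0.filter (fun u => u ∈ Set.Ioo a b)).erase t).card := Finset.card_le_card hsub
            _ = (Z0.filter (fun u => u ∈ Set.Ioo a b)).card - 1 := Finset.card_erase_of_mem htZ
            _ ≤ N := by omega
        have hcard2 : (Z0.filter (fun u => u ∈ Set.Ioo t b)).card ≤ N := by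
          have hsub : Z0.filter (fun u => u ∈ Set.Ioo t b) ⊆
              (Z0.filter (fun u => u ∈ Set.Ioo a b)).erase t := by
            intro u hu
            rw [Finset.mem_filter] at hu
            refine Finset.mem_erase.mpr ⟨hu.2.1.ne', Finset.mem_filter.mpr ⟨hu.1, ht.1.trans hu.2.1, hu.2.2⟩⟩
          calc (Z0.filter (fun u => u ∈ Set.Ioo t b)).card
              ≤ ((Z0.filter (fun u => u ∈ Set.Ioo a b)).erase t).card := Finset.card_le_card hsub
            _ = (Z0.filter (fun u => u ∈ Set.Ioo a b)).card - 1 := Finset.card_erase_of_mem htZ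
            _ ≤ N := by omega
        have h1 : IntegrableOn F (Set.Ioo a t) volume := ih a t ha (ht.2.le.trans hb) hcard1
        have h2 : IntegrableOn F (Set.Ioo t b) volume := ih t b (ha.trans ht.1.le) hb hcard2
        have hsing : IntegrableOn F {t} volume := by
          have hm : volume ({t} : Set ℝ) = 0 := measure_singleton t
          rw [IntegrableOn, Measure.restrict_eq_zero.mpr hm]
          exact integrable_zero_measure
        have hsubset : Set.Ioo a b ⊆ (Set.Ioo a t ∪ {t}) ∪ Set.Ioo t b := by
          intro u hu
          rcases lt_trichotomy u t with h | h | h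
          · exact Or.inl (Or.inl ⟨hu.1, h⟩)
          · exact Or.inl (Or.inr (by simp [h]))
          · exact Or.inr ⟨h, hu.2⟩
        exact ((h1.union hsing).union h2).mono_set hsubset
      · push_neg at hex
        exact base a b ha hb hex
  have hint : IntervalIntegrable F volume s1 s2 := by
    rw [intervalIntegrable_iff_integrableOn_Ioo_of_le hs.le]
    exact key (Z0.filter (fun t => t ∈ Set.Ioo s1 s2)).card s1 s2 le_rfl le_rfl le_rfl
  -- FTC
  have hftc : ∫ x in s1..s2, F x = G s2 - G s1 := by
    apply MeasureTheory.integral_eq_of_hasDerivAt_off_countable_of_le G F hs.le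
      Z0.countable_toSet hGcont.continuousOn ?_ hint
    intro x hx
    obtain ⟨hx1, hx2⟩ := hx
    have hxIcc : x ∈ Set.Icc s1 s2 := ⟨hx1.1.le, hx1.2.le⟩
    apply hGderiv x hxIcc
    have h2 : 0 ≤ e ^ 2 - d x ^ 2 := by
      have := hle x hxIcc
      rw [he2]; linarith
    have h1 : e ^ 2 - d x ^ 2 ≠ 0 := by
      intro hz
      apply hx2
      apply Finset.mem_coe.mpr (hZ x _)
      rw [hQeval x, hz, mul_zero]
    have := lt_of_le_of_ne h2 (Ne.symm h1)
    linarith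
  have hGs2 : G s2 = 0 := by
    simp only [hG_def, hH_def]
    rw [hds2, div_self he.ne', Real.arccos_one]
    simp
  have hGs1 : G s1 = 0 := by
    have harc : Real.arccos (d s1 / e) = Real.pi := by
      rw [hds1, neg_div, div_self he.ne', Real.arccos_neg_one]
    have h1 : Real.sin (((n:ℝ) + m) * Real.pi) = 0 := by
      have hc : ((n:ℝ) + m) = ((n + m : ℕ) : ℝ) := by push_cast; ring
      rw [hc]; exact Real.sin_nat_mul_pi _
    have h2 : Real.sin (((n:ℝ) - m) * Real.pi) = 0 := by
      have hc : ((n:ℝ) - m) = (((n:ℤ) - m : ℤ) : ℝ) := by push_cast; ring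
      rw [hc]; exact Real.sin_int_mul_pi _
    simp only [hG_def, hH_def]
    rw [harc, h1, h2]
    simp
  rw [hGs2, hGs1] at hftc
  norm_num at hftc
  exact hftc
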